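/- arXiv:2506.16030 — 3 statements merged into one kernel-verified Lean document; each statement's English description precedes it below -/
import Mathlib

section
/- If φ : ℝ^N → ℝ is convex, twice continuously differentiable, its choice probabilities sum to one (∑_i ∇_i φ(θ) = 1 for all θ), its off-diagonal Hessian entries are nonpositive, and 2·Tr(∇²φ(θ)) ≤ L for all θ, then ∇φ is L-Lipschitz from the ℓ¹ norm to the ℓ¹ norm: ‖∇φ(θ) − ∇φ(θ')‖₁ ≤ L‖θ − θ'‖₁ for all θ, θ'. -/
/-!
The Jacobian `J` of `∇φ` has zero column sums (differentiate `∑ᵢ ∂ᵢφ = 1`) and nonpositive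
off-diagonal entries, so its diagonal is nonnegative and the absolute sum of column `i` is
`2 Jᵢᵢ ≤ 2 tr J ≤ L`. Hence `J` has `ℓ¹ → ℓ¹` operator norm at most `L` everywhere. Pairing
`∇φ` with the sign vector `s` of `∇φ(θ) - ∇φ(θ')` turns the `ℓ¹` distance into the increment of
the scalar function `⟪s, ∇φ⟫`, to which the mean value theorem applies.
-/

open Finset Matrix

namespace Matrix

variable {m n : Type*} [Fintype m] [Fintype n]

theorem sum_abs_mulVec_le_of_sum_abs_col_le {A : Matrix m n ℝ} {C : ℝ}
    (hA : ∀ i, ∑ j, |A j i| ≤ C) (v : n → ℝ) :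
    ∑ j, |(A *ᵥ v) j| ≤ C * ∑ i, |v i| :=
  calc ∑ j, |(A *ᵥ v) j| ≤ ∑ j, ∑ i, |A j i| * |v i| := by
        refine sum_le_sum fun j _ => ?_
        simpa only [mulVec, dotProduct, abs_mul] using
          abs_sum_le_sum_abs (fun i => A j i * v i) univ
    _ = ∑ i, (∑ j, |A j i|) * |v i| := by rw [sum_comm]; simp only [sum_mul]
    _ ≤ ∑ i, C * |v i| := by gcongr with i; exact hA i
    _ = C * ∑ i, |v i| := by rw [mul_sum]

variable {A : Matrix n n ℝ}

theorem diag_nonneg_of_col_sum_eq_zero {i : n} (hcol : ∑ j, A j i = 0)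
    (hoff : ∀ j, j ≠ i → A j i ≤ 0) : 0 ≤ A i i := by
  classical
  have hrest : ∑ j ∈ univ.erase i, A j i ≤ 0 :=
    sum_nonpos fun j hj => hoff j (ne_of_mem_erase hj)
  linarith [add_sum_erase univ (fun j => A j i) (mem_univ i)]

theorem sum_abs_col_eq_two_mul_diag_of_col_sum_eq_zero {i : n} (hcol : ∑ j, A j i = 0)
    (hoff : ∀ j, j ≠ i → A j i ≤ 0) : ∑ j, |A j i| = 2 * A i i := by
  classical
  have hrest : ∑ j ∈ univ.erase i, |A j i| = -∑ j ∈ univ.erase i, A j i := by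
    rw [← sum_neg_distrib]
    exact sum_congr rfl fun j hj => abs_of_nonpos (hoff j (ne_of_mem_erase hj))
  rw [← add_sum_erase univ _ (mem_univ i), hrest,
    abs_of_nonneg (diag_nonneg_of_col_sum_eq_zero hcol hoff)]
  linarith [add_sum_erase univ (fun j => A j i) (mem_univ i)]

theorem sum_abs_col_le_two_mul_trace (hcol : ∀ i, ∑ j, A j i = 0)
    (hoff : ∀ i j, i ≠ j → A i j ≤ 0) (i : n) : ∑ j, |A j i| ≤ 2 * A.trace := by
  have hdiag : ∀ k, 0 ≤ A k k := fun k =>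
    diag_nonneg_of_col_sum_eq_zero (hcol k) fun j hj => hoff j k hj
  rw [sum_abs_col_eq_two_mul_diag_of_col_sum_eq_zero (hcol i) fun j hj => hoff j i hj]
  gcongr
  exact single_le_sum (f := fun k => A k k) (fun k _ => hdiag k) (mem_univ i)

end Matrix

section MeanValue

variable {ι E : Type*} [Fintype ι] [NormedAddCommGroup E] [NormedSpace ℝ E]

theorem sum_abs_sub_le_of_sum_abs_fderiv_le {f : ι → E → ℝ} (hf : ∀ j, Differentiable ℝ (f j))
    {x y : E} {M : ℝ} (hM : ∀ z ∈ segment ℝ x y, ∑ j, |fderiv ℝ (f j) z (y - x)| ≤ M) :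
    ∑ j, |f j y - f j x| ≤ M := by
  set s : ι → ℝ := fun j => SignType.sign (f j y - f j x)
  have hF : ∀ z ∈ (Set.univ : Set E), HasFDerivWithinAt (fun z => ∑ j, s j * f j z)
      (∑ j, s j • fderiv ℝ (f j) z) Set.univ z := fun z _ =>
    (HasFDerivAt.fun_sum fun j _ => ((hf j z).hasFDerivAt.const_mul (s j))).hasFDerivWithinAt
  obtain ⟨z, hz, hmvt⟩ := domain_mvt hF convex_univ (Set.mem_univ x) (Set.mem_univ y)
  have hsign_mul_le : ∀ (t : SignType) (a : ℝ), t * a ≤ |a| := by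
    rintro (_ | _ | _) a <;> simp [le_abs_self, neg_le_abs]
  calc ∑ j, |f j y - f j x| = ∑ j, s j * f j y - ∑ j, s j * f j x := by
        simp only [← sum_sub_distrib, ← mul_sub, s, sign_mul_self]
    _ = ∑ j, s j * fderiv ℝ (f j) z (y - x) := by
        rw [hmvt]
        simp only [FunLike.coe_sum, Finset.sum_apply, FunLike.coe_smul,
          Pi.smul_apply, smul_eq_mul]
    _ ≤ ∑ j, |fderiv ℝ (f j) z (y - x)| := sum_le_sum fun j _ => hsign_mul_le _ _
    _ ≤ M := hM z hz

end MeanValue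

section Jacobian

variable {ι : Type*} [Fintype ι] [DecidableEq ι]

noncomputable def jacobian (g : ι → (ι → ℝ) → ℝ) (x : ι → ℝ) : Matrix ι ι ℝ :=
  Matrix.of fun j i => fderiv ℝ (g j) x (Pi.single i 1)

variable {g : ι → (ι → ℝ) → ℝ}

theorem fderiv_apply_eq_jacobian_mulVec (j : ι) (x v : ι → ℝ) :
    fderiv ℝ (g j) x v = (jacobian g x *ᵥ v) j := by
  conv_lhs => rw [← univ_sum_single v]
  simp only [map_sum, mulVec, dotProduct, jacobian, of_apply]
  refine sum_congr rfl fun i _ => ?_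
  rw [mul_comm, ← smul_eq_mul, ← map_smul, ← Pi.single_smul', smul_eq_mul, mul_one]

theorem sum_jacobian_col_eq_zero (hg : ∀ j, Differentiable ℝ (g j)) {c : ℝ}
    (hsum : ∀ x, ∑ j, g j x = c) (x : ι → ℝ) (i : ι) : ∑ j, jacobian g x j i = 0 := by
  have hfderiv : ∑ j, fderiv ℝ (g j) x = 0 := by
    rw [← fderiv_fun_sum fun j _ => (hg j).differentiableAt, funext hsum, fderiv_const_apply]
  simpa only [jacobian, of_apply, FunLike.coe_sum, Finset.sum_apply, _root_.zero_apply] using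
    congrArg (· (Pi.single i 1)) hfderiv

theorem sum_abs_sub_le_of_jacobian_offDiag_nonpos (hg : ∀ j, Differentiable ℝ (g j)) {c L : ℝ}
    (hsum : ∀ x, ∑ j, g j x = c) (hoff : ∀ x i j, i ≠ j → jacobian g x i j ≤ 0)
    (htr : ∀ x, 2 * (jacobian g x).trace ≤ L) (x y : ι → ℝ) :
    ∑ j, |g j y - g j x| ≤ L * ∑ j, |y j - x j| := by
  have hcol : ∀ z i, ∑ j, |jacobian g z j i| ≤ L := fun z i =>
    (sum_abs_col_le_two_mul_trace (sum_jacobian_col_eq_zero hg hsum z) (hoff z) i).trans (htr z)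
  refine sum_abs_sub_le_of_sum_abs_fderiv_le hg fun z _ => ?_
  simp only [fderiv_apply_eq_jacobian_mulVec]
  exact Matrix.sum_abs_mulVec_le_of_sum_abs_col_le (hcol z) (y - x)

end Jacobian

theorem gradient_l1_lipschitz_of_trace_bound_general (N : ℕ) (L : ℝ)
    (φ : (Fin N → ℝ) → ℝ)
    (hC2 : ContDiff ℝ 2 φ)
    (hsum : ∀ θ : Fin N → ℝ, ∑ i, fderiv ℝ φ θ (Pi.single i 1) = 1)
    (hoff : ∀ θ : Fin N → ℝ, ∀ i j : Fin N, i ≠ j →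
      fderiv ℝ (fun x => fderiv ℝ φ x (Pi.single i 1)) θ (Pi.single j 1) ≤ 0)
    (htr : ∀ θ : Fin N → ℝ,
      2 * ∑ i, fderiv ℝ (fun x => fderiv ℝ φ x (Pi.single i 1)) θ (Pi.single i 1) ≤ L) :
    ∀ θ θ' : Fin N → ℝ,
      ∑ j, |fderiv ℝ φ θ (Pi.single j 1) - fderiv ℝ φ θ' (Pi.single j 1)|
        ≤ L * ∑ j, |θ j - θ' j| := by
  intro θ θ'
  have hdiff : ∀ j : Fin N, Differentiable ℝ fun x => fderiv ℝ φ x (Pi.single j 1) := fun j =>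
    ((hC2.fderiv_right le_rfl).differentiable one_ne_zero).clm_apply (differentiable_const _)
  exact sum_abs_sub_le_of_jacobian_offDiag_nonpos hdiff hsum hoff htr θ' θ

/-- If `φ` is convex, `C²`, its choice probabilities (partial derivatives) sum to one,
its off-diagonal Hessian entries are nonpositive, and twice the trace of the Hessian is
bounded by `L`, then `∇φ` is `L`-Lipschitz from the `ℓ¹` norm to the `ℓ¹` norm. -/
theorem gradient_l1_lipschitz_of_trace_bound (N : ℕ) (hN : 1 ≤ N) (L : ℝ) (hL : 0 < L)
    (φ : (Fin N → ℝ) → ℝ)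
    (hconv : ConvexOn ℝ Set.univ φ)
    (hC2 : ContDiff ℝ 2 φ)
    (hsum : ∀ θ : Fin N → ℝ, ∑ i, fderiv ℝ φ θ (Pi.single i 1) = 1)
    (hoff : ∀ θ : Fin N → ℝ, ∀ i j : Fin N, i ≠ j →
      fderiv ℝ (fun x => fderiv ℝ φ x (Pi.single i 1)) θ (Pi.single j 1) ≤ 0)
    (htr : ∀ θ : Fin N → ℝ,
      2 * ∑ i, fderiv ℝ (fun x => fderiv ℝ φ x (Pi.single i 1)) θ (Pi.single i 1) ≤ L) :
    ∀ θ θ' : Fin N → ℝ,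
      ∑ j, |fderiv ℝ φ θ (Pi.single j 1) - fderiv ℝ φ θ' (Pi.single j 1)|
        ≤ L * ∑ j, |θ j - θ' j| :=
  gradient_l1_lipschitz_of_trace_bound_general N L φ hC2 hsum hoff htr
end

section
/- Regret bound for the gradient-based (Social Surplus) algorithm: let φ : ℝ^N → ℝ be convex and differentiable with φ(θ) ≥ max_j θ_j for all θ, and assume the Bregman divergence satisfies D_φ(θ_t ‖ θ_{t−1}) ≤ B for all t, where θ_t = ∑_{s≤t} u_s. Then, with decisions x_t = ∇φ(θ_{t−1}), the regret satisfies max_{x ∈ Δ_N} ⟨θ_T, x⟩ − ∑_{t=1}^T ⟨u_t, x_t⟩ ≤ φ(0) + T·B. -/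
/-!
The potential `φ(θ_t)` dominates the payoff of every fixed mixed decision at time `T`, since
`φ ≥ max_j θ_j`. Each step raises it by the first-order term `⟨u_t, ∇φ(θ_{t-1})⟩`, which is the
algorithm's gain, plus the Bregman divergence `D_φ(θ_t ‖ θ_{t-1}) ≤ B`; telescoping gives the bound.
-/

open Finset

theorem Finset.sum_mul_le_of_forall_le {ι R : Type*} [Semiring R] [PartialOrder R]
    [IsOrderedRing R] (s : Finset ι) {a x : ι → R} {c : R} (ha : ∀ j ∈ s, a j ≤ c)
    (hx : ∀ j ∈ s, 0 ≤ x j) (hsum : ∑ j ∈ s, x j = 1) :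
    ∑ j ∈ s, a j * x j ≤ c :=
  calc ∑ j ∈ s, a j * x j
      ≤ ∑ j ∈ s, c * x j := sum_le_sum fun j hj => mul_le_mul_of_nonneg_right (ha j hj) (hx j hj)
    _ = c := by rw [← mul_sum, hsum, mul_one]

theorem Finset.sum_Icc_one_sub_pred {G : Type*} [AddCommGroup G] (f : ℕ → G) (n : ℕ) :
    ∑ t ∈ Icc 1 n, (f t - f (t - 1)) = f n - f 0 := by
  induction n with
  | zero => simp
  | succ n ih =>
    rw [sum_Icc_succ_top (Nat.le_add_left 1 n), ih, Nat.add_sub_cancel]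
    abel

theorem LinearMapClass.apply_eq_sum_mul_single {ι R F : Type*} [Fintype ι] [DecidableEq ι]
    [CommSemiring R] [FunLike F (ι → R) R] [LinearMapClass F R (ι → R) R] (f : F) (v : ι → R) :
    f v = ∑ j, v j * f (Pi.single j 1) := by
  conv_lhs => rw [pi_eq_sum_univ' v, map_sum]
  simp only [map_smul, smul_eq_mul]

theorem le_add_sum_add_mul_of_sub_pred_le (Φ r : ℕ → ℝ) (B : ℝ) (T : ℕ)
    (hstep : ∀ t ∈ Icc 1 T, Φ t - Φ (t - 1) ≤ r t + B) :
    Φ T ≤ Φ 0 + ∑ t ∈ Icc 1 T, r t + T * B := by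
  have hsum := sum_le_sum hstep
  rw [sum_Icc_one_sub_pred, sum_add_distrib, sum_const, Nat.card_Icc, nsmul_eq_mul,
    Nat.add_sub_cancel] at hsum
  linarith

theorem ssa_regret_bound_general (N T : ℕ) (B : ℝ)
    (φ : (Fin N → ℝ) → ℝ)
    (hmax : ∀ (θ : Fin N → ℝ) (j : Fin N), θ j ≤ φ θ)
    (u θ : ℕ → Fin N → ℝ) (hθ0 : θ 0 = 0) (hθ : ∀ t, θ (t + 1) = u (t + 1) + θ t)
    (hB : ∀ t ∈ Finset.Icc 1 T,
      φ (θ t) - φ (θ (t - 1)) - fderiv ℝ φ (θ (t - 1)) (θ t - θ (t - 1)) ≤ B) :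
    ∀ x : Fin N → ℝ, (∀ j, 0 ≤ x j) → (∑ j, x j = 1) →
      (∑ j, θ T j * x j) - ∑ t ∈ Finset.Icc 1 T,
          (∑ j, u t j * fderiv ℝ φ (θ (t - 1)) (Pi.single j 1))
        ≤ φ 0 + T * B := by
  intro x hx hsum
  have hpayoff : ∑ j, θ T j * x j ≤ φ (θ T) :=
    sum_mul_le_of_forall_le _ (fun j _ => hmax _ j) (fun j _ => hx j) hsum
  have hstep : ∀ t ∈ Icc 1 T, φ (θ t) - φ (θ (t - 1)) ≤
      (∑ j, u t j * fderiv ℝ φ (θ (t - 1)) (Pi.single j 1)) + B := by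
    intro t ht
    obtain ⟨s, rfl⟩ : ∃ s, t = s + 1 := ⟨t - 1, by grind⟩
    have hincr : θ (s + 1) - θ (s + 1 - 1) = u (s + 1) := by
      rw [Nat.add_sub_cancel, hθ s, add_sub_cancel_right]
    have := hB (s + 1) ht
    rw [hincr, LinearMapClass.apply_eq_sum_mul_single] at this
    linarith
  have hpotential := le_add_sum_add_mul_of_sub_pred_le (fun t => φ (θ t)) _ B T hstep
  simp only [hθ0] at hpotential
  linarith

/-- Regret bound for the Social Surplus Algorithm: with `φ` convex and differentiable,
`φ(θ) ≥ max_j θ_j`, gradients lying in the simplex, and per-step Bregman divergences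
bounded by `B`, the regret of the decisions `x_t = ∇φ(θ_{t−1})` is at most `φ(0) + T·B`. -/
theorem ssa_regret_bound (N T : ℕ) (hN : 1 ≤ N) (hT : 1 ≤ T) (B : ℝ)
    (φ : (Fin N → ℝ) → ℝ) (hconv : ConvexOn ℝ Set.univ φ) (hdiff : Differentiable ℝ φ)
    (hsimplex : ∀ θ : Fin N → ℝ,
      (∀ j, 0 ≤ fderiv ℝ φ θ (Pi.single j 1)) ∧ ∑ j, fderiv ℝ φ θ (Pi.single j 1) = 1)
    (hmax : ∀ (θ : Fin N → ℝ) (j : Fin N), θ j ≤ φ θ)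
    (u θ : ℕ → Fin N → ℝ) (hθ0 : θ 0 = 0) (hθ : ∀ t, θ (t + 1) = u (t + 1) + θ t)
    (hB : ∀ t ∈ Finset.Icc 1 T,
      φ (θ t) - φ (θ (t - 1)) - fderiv ℝ φ (θ (t - 1)) (θ t - θ (t - 1)) ≤ B) :
    ∀ x : Fin N → ℝ, (∀ j, 0 ≤ x j) → (∑ j, x j = 1) →
      (∑ j, θ T j * x j) - ∑ t ∈ Finset.Icc 1 T,
          (∑ j, u t j * fderiv ℝ φ (θ (t - 1)) (Pi.single j 1))
        ≤ φ 0 + T * B :=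
  ssa_regret_bound_general N T B φ hmax u θ hθ0 hθ hB
end

section
/- S-step moving average prediction error bound: for any sequence u_0, u_1, …, u_T in a normed space (with u_t = u_0 for t < 0) and β_t = (1/S)·∑_{τ=t−S}^{t−1} u_τ, one has ∑_{t=1}^T ‖u_t − β_t‖² ≤ S²·∑_{t=1}^T ‖u_t − u_{t−1}‖². -/
/-! Each `u t - u τ` with `t - S ≤ τ < t` telescopes into at most `S` consecutive increments
ending at `t`, and `β_t` is an average of such `u τ`, so by convexity of balls
`‖u t - β_t‖` is at most the sum of the last `S` increment norms; Cauchy–Schwarz turns its square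
into `S` times the sum of their squares. Summing over `t`, every increment is counted at most `S`
times, and the increments at indices `≤ 0` vanish because `u` is constant there. -/

open Finset Metric

section

variable {E : Type*} [SeminormedAddCommGroup E]

theorem norm_sub_le_sum_range_norm_sub (u : ℤ → E) (t : ℤ) (j : ℕ) :
    ‖u t - u (t - j)‖ ≤ ∑ k ∈ range j, ‖u (t - k) - u (t - k - 1)‖ := by
  induction j with
  | zero => simp
  | succ j ih =>
    have hidx : (t - ↑(j + 1) : ℤ) = t - j - 1 := by push_cast; ring
    rw [sum_range_succ, hidx]
    exact (norm_sub_le_norm_sub_add_norm_sub _ (u (t - j)) _).trans (by gcongr)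

variable [NormedSpace ℝ E]

theorem norm_sub_inv_card_smul_sum_le {ι : Type*} {s : Finset ι} (hs : s.Nonempty) (x : E)
    (y : ι → E) {r : ℝ} (h : ∀ i ∈ s, ‖x - y i‖ ≤ r) :
    ‖x - (#s : ℝ)⁻¹ • ∑ i ∈ s, y i‖ ≤ r := by
  have hcard : (#s : ℝ) ≠ 0 := by exact_mod_cast hs.card_ne_zero
  have hmem : ∑ i ∈ s, (#s : ℝ)⁻¹ • y i ∈ closedBall x r :=
    (convex_closedBall x r).sum_mem (fun _ _ => by positivity)
      (by rw [sum_const, nsmul_eq_mul, mul_inv_cancel₀ hcard])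
      (fun i hi => by rw [mem_closedBall', dist_eq_norm]; exact h i hi)
  rwa [← smul_sum, mem_closedBall', dist_eq_norm] at hmem

noncomputable def movingAverage (u : ℤ → E) (S : ℕ) (t : ℤ) : E :=
  (S : ℝ)⁻¹ • ∑ τ ∈ Icc (t - S) (t - 1), u τ

theorem norm_sub_movingAverage_le (u : ℤ → E) {S : ℕ} (hS : S ≠ 0) (t : ℤ) :
    ‖u t - movingAverage u S t‖ ≤ ∑ k ∈ range S, ‖u (t - k) - u (t - k - 1)‖ := by
  have hcard : #(Icc (t - S) (t - 1)) = S := by rw [Int.card_Icc]; omega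
  have hclose : ∀ τ ∈ Icc (t - S) (t - 1),
      ‖u t - u τ‖ ≤ ∑ k ∈ range S, ‖u (t - k) - u (t - k - 1)‖ := by
    intro τ hτ
    rw [mem_Icc] at hτ
    obtain ⟨j, hjS, rfl⟩ : ∃ j ≤ S, τ = t - j := ⟨(t - τ).toNat, by omega, by omega⟩
    exact (norm_sub_le_sum_range_norm_sub u t j).trans <|
      sum_le_sum_of_subset_of_nonneg (range_subset_range.2 hjS) fun _ _ _ => norm_nonneg _
  have hbound :=
    norm_sub_inv_card_smul_sum_le (nonempty_Icc.2 (by omega : t - S ≤ t - 1)) (u t) u hclose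
  rwa [hcard] at hbound

theorem sq_norm_sub_movingAverage_le (u : ℤ → E) {S : ℕ} (hS : S ≠ 0) (t : ℤ) :
    ‖u t - movingAverage u S t‖ ^ 2 ≤ S * ∑ k ∈ range S, ‖u (t - k) - u (t - k - 1)‖ ^ 2 := by
  calc ‖u t - movingAverage u S t‖ ^ 2
      ≤ (∑ k ∈ range S, ‖u (t - k) - u (t - k - 1)‖) ^ 2 := by
        gcongr; exact norm_sub_movingAverage_le u hS t
    _ ≤ S * ∑ k ∈ range S, ‖u (t - k) - u (t - k - 1)‖ ^ 2 := by
        simpa using sq_sum_le_card_mul_sum_sq (s := range S)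

end

theorem sum_Icc_comp_sub_le {g : ℤ → ℝ} {a : ℤ} (hg : ∀ s, 0 ≤ g s)
    (hga : ∀ s < a, g s = 0) (b : ℤ) (k : ℕ) :
    ∑ t ∈ Icc a b, g (t - k) ≤ ∑ t ∈ Icc a b, g t := by
  calc ∑ t ∈ Icc a b, g (t - k) = ∑ s ∈ Icc (a + -k) (b + -k), g s := by
        rw [← map_add_right_Icc, sum_map]; rfl
    _ ≤ ∑ s ∈ Icc (a + -k) b, g s :=
        sum_le_sum_of_subset_of_nonneg (Icc_subset_Icc_right (by omega)) fun s _ _ => hg s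
    _ = ∑ s ∈ Icc a b, g s := by
        refine (sum_subset (Icc_subset_Icc_left (by omega)) fun s hs hs' => hga s ?_).symm
        rw [mem_Icc] at hs hs'
        omega

theorem moving_average_error_bound_general (V : Type*) [NormedAddCommGroup V] [NormedSpace ℝ V]
    (S T : ℕ) (hS : 1 ≤ S) (u : ℤ → V)
    (h0 : ∀ t : ℤ, t ≤ 0 → u t = u 0) :
    ∑ t ∈ Finset.Icc (1 : ℤ) T,
        ‖u t - (S : ℝ)⁻¹ • ∑ τ ∈ Finset.Icc (t - S) (t - 1), u τ‖ ^ 2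
      ≤ (S : ℝ) ^ 2 * ∑ t ∈ Finset.Icc (1 : ℤ) T, ‖u t - u (t - 1)‖ ^ 2 := by
  have hincr : ∀ s < 1, ‖u s - u (s - 1)‖ ^ 2 = 0 := fun s hs => by
    rw [h0 s (by omega), h0 (s - 1) (by omega), sub_self, norm_zero, sq, mul_zero]
  calc ∑ t ∈ Icc (1 : ℤ) T, ‖u t - movingAverage u S t‖ ^ 2
      ≤ ∑ t ∈ Icc (1 : ℤ) T, (S : ℝ) * ∑ k ∈ range S, ‖u (t - k) - u (t - k - 1)‖ ^ 2 :=
        sum_le_sum fun t _ => sq_norm_sub_movingAverage_le u (by omega) t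
    _ = S * ∑ k ∈ range S, ∑ t ∈ Icc (1 : ℤ) T, ‖u (t - k) - u (t - k - 1)‖ ^ 2 := by
        rw [← mul_sum, sum_comm]
    _ ≤ S * ∑ _k ∈ range S, ∑ t ∈ Icc (1 : ℤ) T, ‖u t - u (t - 1)‖ ^ 2 := by
        gcongr _ * ∑ _k ∈ range S, ?_ with k
        exact sum_Icc_comp_sub_le (g := fun s => ‖u s - u (s - 1)‖ ^ 2)
          (fun _ => by positivity) hincr T k
    _ = (S : ℝ) ^ 2 * ∑ t ∈ Icc (1 : ℤ) T, ‖u t - u (t - 1)‖ ^ 2 := by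
        rw [sum_const, card_range, nsmul_eq_mul]; ring

/-- S-step moving average prediction error bound: for a sequence `u` in a normed space
(constantly `u 0` for nonpositive indices) and `β_t = (1/S)·∑_{τ=t−S}^{t−1} u τ`,
`∑_{t=1}^T ‖u_t − β_t‖² ≤ S²·∑_{t=1}^T ‖u_t − u_{t−1}‖²`. -/
theorem moving_average_error_bound (V : Type*) [NormedAddCommGroup V] [NormedSpace ℝ V]
    (S T : ℕ) (hS : 1 ≤ S) (hT : 1 ≤ T) (u : ℤ → V)
    (h0 : ∀ t : ℤ, t ≤ 0 → u t = u 0) :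
    ∑ t ∈ Finset.Icc (1 : ℤ) T,
        ‖u t - (S : ℝ)⁻¹ • ∑ τ ∈ Finset.Icc (t - S) (t - 1), u τ‖ ^ 2
      ≤ (S : ℝ) ^ 2 * ∑ t ∈ Finset.Icc (1 : ℤ) T, ‖u t - u (t - 1)‖ ^ 2 :=
  moving_average_error_bound_general V S T hS u h0
end
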